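/- arXiv:1703.01752 — 7 statements merged into one kernel-verified Lean document; each statement's English description precedes it below -/
import Mathlib

section
/- Let f and g be entire functions with f not identically zero. Then there exists an entire function h with g = f·h (pointwise) if and only if for every z ∈ ℂ the order of vanishing of f at z is less than or equal to the order of vanishing of g at z (in particular every zero of f is a zero of g of at least the same multiplicity). -/
/-!
Additivity of the order under multiplication gives one direction. Conversely, if
`ord f ≤ ord g` everywhere then the meromorphic function `g / f` has nonnegative order at every
point, so its meromorphic normal form (which fills in the removable singularities) is entire.
It agrees with `g / f` off the isolated zeros of `f`, so `f` times it is `g` by continuity.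
-/

open Filter Topology Set

section

variable {𝕜 : Type*} [NontriviallyNormedField 𝕜] {f g : 𝕜 → 𝕜} {x : 𝕜}

theorem AnalyticAt.analyticOrderAt_le_mul (hf : AnalyticAt 𝕜 f x) (hg : AnalyticAt 𝕜 g x) :
    analyticOrderAt f x ≤ analyticOrderAt (f * g) x := by
  rw [analyticOrderAt_mul hf hg]
  exact le_self_add

theorem AnalyticAt.meromorphicOrderAt_div_nonneg (hf : AnalyticAt 𝕜 f x) (hg : AnalyticAt 𝕜 g x)
    (hf_fin : analyticOrderAt f x ≠ ⊤) (hfg : analyticOrderAt f x ≤ analyticOrderAt g x) :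
    0 ≤ meromorphicOrderAt (g / f) x := by
  rw [meromorphicOrderAt_div hg.meromorphicAt hf.meromorphicAt, hf.meromorphicOrderAt_eq,
    hg.meromorphicOrderAt_eq]
  lift analyticOrderAt f x to ℕ using hf_fin with m
  cases hn : analyticOrderAt g x with
  | top => simp
  | coe n =>
    rw [hn, Nat.cast_le] at hfg
    simp only [ENat.map_natCast]
    rw [← WithTop.LinearOrderedAddCommGroup.coe_sub, WithTop.coe_nonneg, sub_nonneg]
    exact_mod_cast hfg

theorem AnalyticAt.eventually_ne_zero_of_analyticOrderAt_ne_top (hf : AnalyticAt 𝕜 f x)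
    (hf_fin : analyticOrderAt f x ≠ ⊤) : ∀ᶠ z in 𝓝[≠] x, f z ≠ 0 :=
  hf.eventually_eq_zero_or_eventually_ne_zero.resolve_left (mt analyticOrderAt_eq_top.2 hf_fin)

theorem AnalyticOnNhd.exists_analyticOnNhd_eqOn_mul_of_analyticOrderAt_le {U : Set 𝕜}
    (hf : AnalyticOnNhd 𝕜 f U) (hg : AnalyticOnNhd 𝕜 g U)
    (hf_fin : ∀ x ∈ U, analyticOrderAt f x ≠ ⊤)
    (hfg : ∀ x ∈ U, analyticOrderAt f x ≤ analyticOrderAt g x) :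
    ∃ h : 𝕜 → 𝕜, AnalyticOnNhd 𝕜 h U ∧ EqOn g (f * h) U := by
  have hmero : MeromorphicOn (g / f) U := hg.meromorphicOn.div hf.meromorphicOn
  set h := toMeromorphicNFOn (g / f) U
  have h_eq (x : 𝕜) (hx : x ∈ U) : h =ᶠ[𝓝[≠] x] g / f :=
    hmero.toMeromorphicNFOn_eq_self_on_nhdsNE hx
  have hh : AnalyticOnNhd 𝕜 h U := fun x hx ↦ by
    rw [← (meromorphicNFOn_toMeromorphicNFOn _ _ hx).meromorphicOrderAt_nonneg_iff_analyticAt,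
      meromorphicOrderAt_congr (h_eq x hx)]
    exact (hf x hx).meromorphicOrderAt_div_nonneg (hg x hx) (hf_fin x hx) (hfg x hx)
  refine ⟨h, hh, fun x hx ↦ ?_⟩
  -- Off the isolated zeros of `f` we have `f * (g / f) = g`; continuity gives it at `x` too.
  have hne : g =ᶠ[𝓝[≠] x] f * h := by
    filter_upwards [h_eq x hx,
      (hf x hx).eventually_ne_zero_of_analyticOrderAt_ne_top (hf_fin x hx)] with z hz hfz
    rw [Pi.mul_apply, hz, Pi.div_apply, mul_div_cancel₀ _ hfz]
  exact ((hg x hx).continuousAt.eventuallyEq_nhds_iff_eventuallyEq_nhdsNE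
    ((hf x hx).mul (hh x hx)).continuousAt).1 hne |>.eq_of_nhds

end

theorem AnalyticOnNhd.analyticOrderAt_ne_top_of_ne_zero {𝕜 E : Type*}
    [NontriviallyNormedField 𝕜] [PreconnectedSpace 𝕜] [NormedAddCommGroup E] [NormedSpace 𝕜 E]
    {f : 𝕜 → E} (hf : AnalyticOnNhd 𝕜 f univ) (hf0 : f ≠ 0) (x : 𝕜) :
    analyticOrderAt f x ≠ ⊤ := fun htop ↦
  hf0 <| funext fun z ↦ hf.eqOn_zero_of_preconnected_of_eventuallyEq_zero isPreconnected_univ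
    (mem_univ x) (analyticOrderAt_eq_top.1 htop) (mem_univ z)

/-- For entire functions `f` and `g` with `f` not identically zero,
`g = f·h` for some entire `h` iff at every point the order of vanishing of `f` is at
most the order of vanishing of `g`. -/
theorem entire_dvd_iff_order_le (f g : ℂ → ℂ) (hf : Differentiable ℂ f)
    (hg : Differentiable ℂ g) (hf0 : f ≠ 0) :
    (∃ h : ℂ → ℂ, Differentiable ℂ h ∧ g = f * h) ↔
      ∀ z : ℂ, analyticOrderAt f z ≤ analyticOrderAt g z := by
  rw [← Complex.analyticOnNhd_univ_iff_differentiable] at hf hg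
  constructor
  · rintro ⟨h, hh, rfl⟩ z
    exact (hf z (mem_univ z)).analyticOrderAt_le_mul (hh.analyticAt z)
  · intro hfg
    obtain ⟨h, hh, hgfh⟩ := hf.exists_analyticOnNhd_eqOn_mul_of_analyticOrderAt_le hg
      (fun x _ ↦ hf.analyticOrderAt_ne_top_of_ne_zero hf0 x) (fun x _ ↦ hfg x)
    exact ⟨h, Complex.analyticOnNhd_univ_iff_differentiable.1 hh,
      funext fun z ↦ hgfh (mem_univ z)⟩
end

section
/- Let z : ℕ → ℂ be an injective sequence of complex numbers with no finite accumulation point (i.e., ‖z k‖ → ∞ as k → ∞), and let m : ℕ → ℕ with m k ≥ 1 for all k. Then there exists an entire function f, not identically zero, such that for every k the order of vanishing of f at z k equals m k, and f(w) ≠ 0 for every w ∈ ℂ not in the range of z. -/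
/-!
List the zeros with multiplicity as a sequence `a n` with `‖a n‖ → ∞` and take the Weierstrass
product `∏ₙ Eₙ (w / a n)`, where `Eₚ u = (1 - u) exp (u + u² / 2 + ⋯ + uᵖ / p)`. On a disc
`‖w‖ < R`, the factors with `2 R < ‖a n‖` are `exp Lₙ(w)` with `‖Lₙ(w)‖ ≤ 2⁻ⁿ`, so there the
product is a finite product of factors times the exponential of a uniformly convergent, hence
holomorphic, series. Each factor `Eₙ (w / a n)` vanishes only at `a n`, and simply, so the order
at `w₀` counts the indices `n` with `a n = w₀`.
-/

open Complex Filter Finset Topology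

theorem analyticOrderAt_finsetProd {𝕜 ι : Type*} [NontriviallyNormedField 𝕜] {s : Finset ι}
    {f : ι → 𝕜 → 𝕜} {z₀ : 𝕜} (hf : ∀ i ∈ s, AnalyticAt 𝕜 (f i) z₀) :
    analyticOrderAt (∏ i ∈ s, f i) z₀ = ∑ i ∈ s, analyticOrderAt (f i) z₀ := by
  classical
  induction s using Finset.induction_on with
  | empty => simp [analyticOrderAt_eq_zero]
  | insert i s hi ih =>
    rw [prod_insert hi, sum_insert hi, analyticOrderAt_mul (hf i (mem_insert_self i s))
      (Finset.analyticAt_prod _ fun j hj => hf j (mem_insert_of_mem hj)),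
      ih fun j hj => hf j (mem_insert_of_mem hj)]

namespace Complex

@[fun_prop]
lemma differentiable_logTaylor (n : ℕ) : Differentiable ℂ (logTaylor n) := by
  unfold logTaylor
  fun_prop

/-- The Weierstrass elementary factor `(1 - u) * exp (u + u ^ 2 / 2 + ⋯ + u ^ p / p)`:
`-logTaylor (p + 1) (-u)` is that polynomial. -/
noncomputable def weierstrassFactor (p : ℕ) (u : ℂ) : ℂ :=
  (1 - u) * exp (-logTaylor (p + 1) (-u))

noncomputable def weierstrassLog (p : ℕ) (u : ℂ) : ℂ :=
  log (1 - u) - logTaylor (p + 1) (-u)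

lemma exp_weierstrassLog (p : ℕ) {u : ℂ} (hu : u ≠ 1) :
    exp (weierstrassLog p u) = weierstrassFactor p u := by
  rw [weierstrassLog, sub_eq_add_neg, exp_add, exp_log (sub_ne_zero.2 hu.symm), weierstrassFactor]

lemma norm_weierstrassLog_le (p : ℕ) {u : ℂ} (hu : ‖u‖ ≤ 1 / 2) :
    ‖weierstrassLog p u‖ ≤ (1 / 2) ^ p := by
  have hlt : ‖-u‖ < 1 := by rw [norm_neg]; linarith
  calc ‖weierstrassLog p u‖ ≤ ‖u‖ ^ (p + 1) * (1 - ‖u‖)⁻¹ / (p + 1) := by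
        simpa [weierstrassLog, sub_eq_add_neg] using norm_log_sub_logTaylor_le p hlt
    _ ≤ (1 / 2) ^ (p + 1) * 2 / 1 := by
        gcongr
        · exact inv_nonneg.2 (by linarith)
        · rw [inv_le_comm₀ (by linarith) two_pos]; linarith
        · linarith
    _ = (1 / 2) ^ p := by ring

lemma differentiableAt_weierstrassLog (p : ℕ) {u : ℂ} (hu : ‖u‖ < 1) :
    DifferentiableAt ℂ (weierstrassLog p) u := by
  have hslit : 1 - u ∈ slitPlane := by
    simpa [sub_eq_add_neg] using mem_slitPlane_of_norm_lt_one (z := -u) (by rwa [norm_neg])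
  unfold weierstrassLog
  fun_prop (disch := exact hslit)

lemma weierstrassFactor_div_eq_sub_mul {c : ℂ} (hc : c ≠ 0) (p : ℕ) (w : ℂ) :
    weierstrassFactor p (w / c) = (w - c) * (-c⁻¹ * exp (-logTaylor (p + 1) (-(w / c)))) := by
  rw [weierstrassFactor]
  field_simp
  ring

/-- For `c = 0`, where `w / c` is junk, the factor is `w`. -/
noncomputable def weierstrassTerm (c : ℂ) (p : ℕ) (w : ℂ) : ℂ :=
  if c = 0 then w else weierstrassFactor p (w / c)

lemma exists_weierstrassTerm_eq_sub_mul (c : ℂ) (p : ℕ) :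
    ∃ g : ℂ → ℂ, Differentiable ℂ g ∧ (∀ w, g w ≠ 0) ∧
      weierstrassTerm c p = fun w => (w - c) * g w := by
  by_cases hc : c = 0
  · exact ⟨1, differentiable_const 1, fun _ => one_ne_zero, by ext; simp [weierstrassTerm, hc]⟩
  · refine ⟨fun w => -c⁻¹ * exp (-logTaylor (p + 1) (-(w / c))), by fun_prop,
      fun w => mul_ne_zero (by simpa using hc) (exp_ne_zero _), ?_⟩
    ext w
    simp only [weierstrassTerm, if_neg hc, weierstrassFactor_div_eq_sub_mul hc]

lemma differentiable_weierstrassTerm (c : ℂ) (p : ℕ) : Differentiable ℂ (weierstrassTerm c p) := by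
  obtain ⟨g, hg, -, hfun⟩ := exists_weierstrassTerm_eq_sub_mul c p
  rw [hfun]
  fun_prop

lemma analyticOrderAt_weierstrassTerm (c : ℂ) (p : ℕ) (w₀ : ℂ) :
    analyticOrderAt (weierstrassTerm c p) w₀ = if w₀ = c then 1 else 0 := by
  obtain ⟨g, hg, hg0, hfun⟩ := exists_weierstrassTerm_eq_sub_mul c p
  have hmul : weierstrassTerm c p = (· - c) * g := hfun
  rw [hmul, analyticOrderAt_mul (by fun_prop) (hg.analyticAt w₀),
    ((hg.analyticAt w₀).analyticOrderAt_eq_zero).2 (hg0 w₀), add_zero]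
  split_ifs with h
  · rw [h, analyticOrderAt_id_sub_const_self]
  · exact analyticOrderAt_id_sub_const_of_ne h

noncomputable def weierstrassProduct (a : ℕ → ℂ) (w : ℂ) : ℂ :=
  ∏' n, weierstrassTerm (a n) n w

noncomputable def weierstrassTail (a : ℕ → ℂ) (N : ℕ) (w : ℂ) : ℂ :=
  ∑' i, weierstrassLog (i + N) (w / a (i + N))

section WeierstrassProduct

variable {a : ℕ → ℂ} {N : ℕ} {R : ℝ}

lemma norm_div_le_half {c w : ℂ} (h : 2 * ‖w‖ < ‖c‖) : ‖w / c‖ ≤ 1 / 2 := by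
  have hc : 0 < ‖c‖ := by linarith [norm_nonneg w]
  rw [norm_div, div_le_iff₀ hc]
  linarith

lemma summable_half_pow_add (N : ℕ) : Summable fun i : ℕ => (1 / 2 : ℝ) ^ (i + N) := by
  simp_rw [pow_add]
  exact (summable_geometric_of_lt_one (by norm_num) (by norm_num)).mul_right _

lemma hasProd_weierstrassTerm {w : ℂ} (hN : ∀ n, N ≤ n → 2 * ‖w‖ < ‖a n‖) :
    HasProd (fun n => weierstrassTerm (a n) n w)
      ((∏ n ∈ range N, weierstrassTerm (a n) n w) * exp (weierstrassTail a N w)) := by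
  refine HasProd.prod_range_mul ?_
  have hsum : Summable fun i => weierstrassLog (i + N) (w / a (i + N)) :=
    .of_norm_bounded (summable_half_pow_add N) fun i =>
      norm_weierstrassLog_le _ (norm_div_le_half (hN _ (Nat.le_add_left N i)))
  have hexp (i : ℕ) :
      exp (weierstrassLog (i + N) (w / a (i + N))) = weierstrassTerm (a (i + N)) (i + N) w := by
    have hlt := hN (i + N) (Nat.le_add_left N i)
    have hne : a (i + N) ≠ 0 := norm_pos_iff.1 (by linarith [norm_nonneg w])
    have hne1 : w / a (i + N) ≠ 1 := fun h1 => by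
      have := norm_div_le_half hlt
      norm_num [h1] at this
    rw [exp_weierstrassLog _ hne1, weierstrassTerm, if_neg hne]
  simpa only [Function.comp_def, hexp] using hsum.hasSum.cexp (a := weierstrassTail a N w)

variable (hN : ∀ n, N ≤ n → 2 * R < ‖a n‖)
include hN

lemma differentiableOn_weierstrassTail :
    DifferentiableOn ℂ (weierstrassTail a N) (Metric.ball 0 R) := by
  have hlt {w : ℂ} (hw : w ∈ Metric.ball 0 R) (i : ℕ) : 2 * ‖w‖ < ‖a (i + N)‖ := by
    rw [mem_ball_zero_iff] at hw
    linarith [hN (i + N) (Nat.le_add_left N i)]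
  refine differentiableOn_tsum_of_summable_norm (summable_half_pow_add N)
    (fun i w hw => ?_) Metric.isOpen_ball
    (fun i w hw => norm_weierstrassLog_le _ (norm_div_le_half (hlt hw i)))
  refine (DifferentiableAt.comp w (differentiableAt_weierstrassLog _ ?_)
    (differentiableAt_id.div_const _)).differentiableWithinAt
  exact (norm_div_le_half (hlt hw i)).trans_lt (by norm_num)

lemma weierstrassProduct_eqOn :
    Set.EqOn (weierstrassProduct a)
      ((∏ n ∈ range N, weierstrassTerm (a n) n) * exp ∘ weierstrassTail a N)
      (Metric.ball 0 R) := fun w hw => by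
  rw [Pi.mul_apply, Finset.prod_apply, Function.comp_apply]
  exact (hasProd_weierstrassTerm fun n hn => by
    rw [mem_ball_zero_iff] at hw
    linarith [hN n hn]).tprod_eq

variable {w₀ : ℂ} (hw₀ : ‖w₀‖ < R)
include hw₀

lemma weierstrassProduct_eventuallyEq :
    weierstrassProduct a =ᶠ[𝓝 w₀] (∏ n ∈ range N, weierstrassTerm (a n) n) *
      exp ∘ weierstrassTail a N :=
  (weierstrassProduct_eqOn hN).eventuallyEq_of_mem
    (Metric.isOpen_ball.mem_nhds (mem_ball_zero_iff.2 hw₀))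

lemma analyticAt_weierstrassTail : AnalyticAt ℂ (weierstrassTail a N) w₀ :=
  (differentiableOn_weierstrassTail hN).analyticAt
    (Metric.isOpen_ball.mem_nhds (mem_ball_zero_iff.2 hw₀))

end WeierstrassProduct

variable {a : ℕ → ℂ}

theorem analyticAt_weierstrassProduct (ha : Tendsto (‖a ·‖) atTop atTop) (w₀ : ℂ) :
    AnalyticAt ℂ (weierstrassProduct a) w₀ := by
  obtain ⟨N, hN⟩ := eventually_atTop.1 (ha.eventually_gt_atTop (2 * (‖w₀‖ + 1)))
  have hw₀ : ‖w₀‖ < ‖w₀‖ + 1 := lt_add_one _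
  refine AnalyticAt.congr ?_ (weierstrassProduct_eventuallyEq hN hw₀).symm
  exact (Finset.analyticAt_prod _ fun n _ => (differentiable_weierstrassTerm _ _).analyticAt w₀).mul
    (analyticAt_weierstrassTail hN hw₀).cexp

theorem analyticOrderAt_weierstrassProduct (ha : Tendsto (‖a ·‖) atTop atTop) (w₀ : ℂ) :
    analyticOrderAt (weierstrassProduct a) w₀ = (a ⁻¹' {w₀}).encard := by
  obtain ⟨N, hN⟩ := eventually_atTop.1 (ha.eventually_gt_atTop (2 * (‖w₀‖ + 1)))
  have hw₀ : ‖w₀‖ < ‖w₀‖ + 1 := lt_add_one _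
  have hfiber : a ⁻¹' {w₀} = ↑((range N).filter (w₀ = a ·)) := by
    ext n
    simp only [Set.mem_preimage, Set.mem_singleton_iff, coe_filter, mem_range, Set.mem_ofPred_eq]
    refine ⟨fun h => ⟨not_le.1 fun hn => ?_, h.symm⟩, fun h => h.2.symm⟩
    have := hN n hn
    rw [h] at this
    linarith [norm_nonneg w₀]
  have hterm (n : ℕ) : AnalyticAt ℂ (weierstrassTerm (a n) n) w₀ :=
    (differentiable_weierstrassTerm _ _).analyticAt w₀
  have htail := (analyticAt_weierstrassTail hN hw₀).cexp
  rw [analyticOrderAt_congr (weierstrassProduct_eventuallyEq hN hw₀),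
    analyticOrderAt_mul (Finset.analyticAt_prod _ fun n _ => hterm n) htail,
    htail.analyticOrderAt_eq_zero.2 (exp_ne_zero _), add_zero,
    analyticOrderAt_finsetProd fun n _ => hterm n]
  simp only [analyticOrderAt_weierstrassTerm, sum_boole, hfiber, Set.encard_coe_eq_coe_finsetCard]

end Complex

lemma exists_tendsto_encard_preimage_singleton {m : ℕ → ℕ} (hm : ∀ k, 1 ≤ m k) :
    ∃ s : ℕ → ℕ, Tendsto s atTop atTop ∧ ∀ k, (s ⁻¹' {k}).encard = m k := by
  have : Infinite ((k : ℕ) × Fin (m k)) :=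
    Infinite.of_injective (fun k => ⟨k, ⟨0, hm k⟩⟩) fun _ _ h => congrArg Sigma.fst h
  obtain ⟨_⟩ := nonempty_denumerable ((k : ℕ) × Fin (m k))
  let e := (Denumerable.eqv ((k : ℕ) × Fin (m k))).symm
  have hfiber (k : ℕ) : ((Sigma.fst ∘ e) ⁻¹' {k}).encard = m k := by
    rw [Set.preimage_comp, Set.encard_preimage_of_bijective e.bijective, ← Set.range_sigmaMk,
      ← Set.image_univ, sigma_mk_injective.encard_image, Set.encard_univ,
      ENat.card_eq_coe_fintype_card, Fintype.card_fin]
  refine ⟨Sigma.fst ∘ e, ?_, hfiber⟩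
  rw [← Nat.cofinite_eq_atTop]
  exact Tendsto.cofinite_of_finite_preimage_singleton fun k =>
    (Set.finite_of_encard_eq_coe (hfiber k)).to_subtype

/-- **Weierstrass' theorem.** Given an injective sequence `z` of complex
numbers with no finite accumulation point and prescribed multiplicities `m k ≥ 1`,
there is a nonzero entire function whose order of vanishing at `z k` is exactly `m k`
and which does not vanish elsewhere. -/
theorem exists_entire_with_prescribed_zeros (z : ℕ → ℂ) (hz : Function.Injective z)
    (hz' : Tendsto (fun k => ‖z k‖) atTop atTop) (m : ℕ → ℕ) (hm : ∀ k, 1 ≤ m k) :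
    ∃ (f : ℂ → ℂ) (hf : Differentiable ℂ f), f ≠ 0 ∧
      (∀ k : ℕ, analyticOrderAt f (z k) = (m k : ℕ∞)) ∧
      (∀ w : ℂ, w ∉ Set.range z → f w ≠ 0) := by
  obtain ⟨s, hs, hfiber⟩ := exists_tendsto_encard_preimage_singleton hm
  have ha : Tendsto (‖(z ∘ s) ·‖) atTop atTop := hz'.comp hs
  have hanalytic (w : ℂ) := analyticAt_weierstrassProduct ha w
  have horder (k : ℕ) : analyticOrderAt (weierstrassProduct (z ∘ s)) (z k) = m k := by
    rw [analyticOrderAt_weierstrassProduct ha, ← hfiber k, Set.preimage_comp,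
      ← Set.image_singleton, Set.preimage_image_eq _ hz]
  refine ⟨weierstrassProduct (z ∘ s), fun w => (hanalytic w).differentiableAt, ?_, horder, ?_⟩
  · intro h
    have := horder 0
    rw [h, analyticOrderAt_eq_top.2 (by simp)] at this
    exact ENat.top_ne_natCast _ this
  · intro w hw
    rw [← (hanalytic w).analyticOrderAt_eq_zero, analyticOrderAt_weierstrassProduct ha,
      Set.encard_eq_zero, Set.preimage_comp, Set.preimage_singleton_eq_empty.2 hw, Set.preimage_empty]
end

section
/- Let f and g be entire functions with no common zero, i.e., there is no z ∈ ℂ with f(z) = 0 and g(z) = 0. Then there exist entire functions u and v such that f(z)·u(z) + g(z)·v(z) = 1 for all z ∈ ℂ. -/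
/-!
If `g ≡ 0` then `f` has no zeros and `1 / f` does it. Otherwise the zero set `S` of `g` is closed
and discrete, and by the Mittag-Leffler theorem there is a function `M`, holomorphic off `S`,
with the same principal parts as the meromorphic function `1 / (f g)` at every point of `S`.
Since `f` does not vanish on `S`, both `u = g M` and `v = 1 / g - f M` have only removable
singularities, and `f u + g v = 1` holds off `S`, hence everywhere.

Mittag-Leffler is proved in the classical way: from each prescribed principal part `P s` one
subtracts a Taylor polynomial of `P s` approximating it to within `ε s` on the disk of radius
`|s| / 2`, where `∑ ε s < ∞`; the corrected series then converges locally uniformly.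
-/

open Metric Filter Set Function Topology

section Meromorphic

variable {𝕜 E : Type*} [NontriviallyNormedField 𝕜] [NormedAddCommGroup E] [NormedSpace 𝕜 E]

def HasRemovableSingularityAt (F : 𝕜 → E) (s : 𝕜) : Prop :=
  ∃ G : 𝕜 → E, AnalyticAt 𝕜 G s ∧ F =ᶠ[𝓝[≠] s] G

theorem AnalyticAt.hasRemovableSingularityAt {F : 𝕜 → E} {s : 𝕜} (hF : AnalyticAt 𝕜 F s) :
    HasRemovableSingularityAt F s :=
  ⟨F, hF, .rfl⟩

theorem HasRemovableSingularityAt.sub {F₁ F₂ : 𝕜 → E} {s : 𝕜}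
    (h₁ : HasRemovableSingularityAt F₁ s) (h₂ : HasRemovableSingularityAt F₂ s) :
    HasRemovableSingularityAt (F₁ - F₂) s :=
  let ⟨G₁, hG₁, hFG₁⟩ := h₁
  let ⟨G₂, hG₂, hFG₂⟩ := h₂
  ⟨G₁ - G₂, hG₁.sub hG₂, hFG₁.sub hFG₂⟩

theorem exists_analyticOnNhd_eventuallyEq_of_hasRemovableSingularityAt [CompleteSpace E]
    {F : 𝕜 → E} {U : Set 𝕜} (hF : ∀ z ∈ U, HasRemovableSingularityAt F z) :
    ∃ F' : 𝕜 → E, AnalyticOnNhd 𝕜 F' U ∧ ∀ z ∈ U, F' =ᶠ[𝓝[≠] z] F := by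
  have hmer : MeromorphicOn F U := fun z hz =>
    let ⟨_, hG, hFG⟩ := hF z hz
    hG.meromorphicAt.congr hFG.symm
  refine ⟨toMeromorphicNFOn F U, fun z hz => ?_,
    fun z hz => hmer.toMeromorphicNFOn_eq_self_on_nhdsNE hz⟩
  rw [← (meromorphicNFOn_toMeromorphicNFOn F U hz).meromorphicOrderAt_nonneg_iff_analyticAt,
    meromorphicOrderAt_toMeromorphicNFOn hmer hz]
  exact (hmer z hz).meromorphicOrderAt_nonneg_iff.2 (hF z hz)

theorem FormalMultilinearSeries.differentiable_partialSum (p : FormalMultilinearSeries 𝕜 𝕜 E)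
    (n : ℕ) : Differentiable 𝕜 (p.partialSum n) := by
  have : p.partialSum n = fun z => ∑ k ∈ Finset.range n, z ^ k • p.coeff k := by
    ext z
    exact Finset.sum_congr rfl fun k _ => p.apply_eq_pow_smul_coeff
  rw [this]
  fun_prop

theorem eq_sum_add_pow_smul_iterate_dslope (f : 𝕜 → E) (a b : 𝕜) (n : ℕ) :
    f b = ∑ j ∈ Finset.range n, (b - a) ^ j • (swap dslope a)^[j] f a
      + (b - a) ^ n • (swap dslope a)^[n] f b := by
  induction n with
  | zero => simp
  | succ n ih =>
    rw [ih, Finset.sum_range_succ, iterate_succ_apply', pow_succ, mul_smul, swap,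
      sub_smul_dslope, smul_sub]
    abel

/-- Writing `A z = (z - s) ^ n • F z`, the principal part `P` is the Taylor polynomial of degree
`< n` of `A` at `s`, divided by `(z - s) ^ n`; the Taylor coefficients are iterated `dslope`s. -/
theorem MeromorphicAt.exists_differentiableOn_hasRemovableSingularityAt_sub {F : 𝕜 → E} {s : 𝕜}
    (hF : MeromorphicAt F s) :
    ∃ P : 𝕜 → E, DifferentiableOn 𝕜 P {s}ᶜ ∧ HasRemovableSingularityAt (F - P) s := by
  obtain ⟨n, p, hp⟩ := hF
  set A : 𝕜 → E := fun z => (z - s) ^ n • F z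
  refine ⟨fun z => ∑ j ∈ Finset.range n, ((z - s) ^ (n - j))⁻¹ • (swap dslope s)^[j] A s,
    ?_, (swap dslope s)^[n] A, (hp.has_fpower_series_iterate_dslope_fslope n).analyticAt, ?_⟩
  · refine DifferentiableOn.fun_sum fun j _ => DifferentiableOn.smul_const ?_ _
    exact (((differentiable_id.sub_const s).pow _).differentiableOn).inv
      fun z hz => pow_ne_zero _ (sub_ne_zero.2 hz)
  · filter_upwards [self_mem_nhdsWithin] with z hz
    have hzs : (z - s) ^ n ≠ 0 := pow_ne_zero _ (sub_ne_zero.2 hz)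
    rw [Pi.sub_apply, sub_eq_iff_eq_add']
    calc F z = ((z - s) ^ n)⁻¹ • A z := by simp [A, smul_smul, hzs]
      _ = _ := by
        rw [eq_sum_add_pow_smul_iterate_dslope A s z n, smul_add, Finset.smul_sum, smul_smul,
          inv_mul_cancel₀ hzs, one_smul]
        congr 1
        refine Finset.sum_congr rfl fun j hj => ?_
        rw [smul_smul, pow_sub₀ _ (sub_ne_zero.2 hz) (Finset.mem_range.1 hj).le, mul_inv,
          inv_inv]

end Meromorphic

section MittagLeffler

variable {E : Type*} [NormedAddCommGroup E] [NormedSpace ℂ E] [CompleteSpace E]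

theorem DifferentiableOn.exists_differentiable_norm_sub_lt {F : ℂ → E} {c : ℂ} {r r' : ℝ}
    (hF : DifferentiableOn ℂ F (ball c r)) (hr : r' < r) {ε : ℝ} (hε : 0 < ε) :
    ∃ T : ℂ → E, Differentiable ℂ T ∧ ∀ z ∈ ball c r', ‖F z - T z‖ < ε := by
  rcases le_or_gt r' 0 with hr' | hr'
  · exact ⟨0, differentiable_const 0, by simp [ball_eq_empty.2 hr']⟩
  set R : NNReal := ⟨(r' + r) / 2, by linarith⟩
  have hR : (R : ℝ) = (r' + r) / 2 := rfl
  have hp := (hF.mono (closedBall_subset_ball (show (R : ℝ) < r by linarith))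
    ).hasFPowerSeriesOnBall (show 0 < R by rw [← NNReal.coe_pos]; linarith)
  have hlim := hp.tendstoUniformlyOn' (r' := r'.toNNReal) (by
    rw [ENNReal.coe_lt_coe, ← NNReal.coe_lt_coe, Real.coe_toNNReal _ hr'.le]; linarith)
  obtain ⟨n, hn⟩ := (Metric.tendstoUniformlyOn_iff.1 hlim ε hε).exists
  refine ⟨fun z => (cauchyPowerSeries F c R).partialSum n (z - c),
    ((cauchyPowerSeries F c R).differentiable_partialSum n).comp (differentiable_id.sub_const c),
    fun z hz => ?_⟩
  rw [← dist_eq_norm]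
  exact hn z (by rwa [Real.coe_toNNReal _ hr'.le])

variable {ι : Type*} {a : ι → ℂ} {P : ι → ℂ → E}

theorem differentiableOn_tsum_sub_sum {T : ι → ℂ → E} {ε : ι → ℝ}
    (hP : ∀ i, DifferentiableOn ℂ (P i) {a i}ᶜ) (hT : ∀ i, Differentiable ℂ (T i))
    (hε : Summable ε) (hPT : ∀ i, ∀ z ∈ ball 0 (‖a i‖ / 2), ‖P i z - T i z‖ ≤ ε i)
    {R : ℝ} (B : Finset ι) (hB : ∀ i ∉ B, 2 * R ≤ ‖a i‖) :
    DifferentiableOn ℂ (fun z => ∑' i, (P i z - T i z) - ∑ i ∈ B, (P i z - T i z))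
      (ball 0 R) := by
  have hsub : ∀ i ∉ B, ball (0 : ℂ) R ⊆ ball 0 (‖a i‖ / 2) := fun i hi =>
    ball_subset_ball (by linarith [hB i hi])
  have htail : DifferentiableOn ℂ (fun z => ∑' i : ↥((B : Set ι)ᶜ), (P i z - T i z))
      (ball 0 R) := by
    refine Complex.differentiableOn_tsum_of_summable_norm (hε.subtype _) (fun i => ?_)
      isOpen_ball fun i z hz => hPT i z (hsub i i.2 hz)
    refine ((hP i).mono fun z hz hzi => ?_).sub (hT i).differentiableOn
    have := hsub i i.2 hz
    rw [mem_singleton_iff.1 hzi, mem_ball_zero_iff] at this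
    linarith [norm_nonneg (a i)]
  refine htail.congr fun z hz => ?_
  have hsum : Summable fun i => P i z - T i z :=
    hε.of_norm_bounded_eventually (B.finite_toSet.subset fun i hi => by
      by_contra hiB
      exact hi (hPT i z (hsub i hiB hz)))
  rw [← hsum.sum_add_tsum_compl (s := B), add_sub_cancel_left]

theorem exists_forall_differentiableOn_sub_sum (ha : ∀ R, {i | ‖a i‖ ≤ R}.Finite)
    (hP : ∀ i, DifferentiableOn ℂ (P i) {a i}ᶜ) :
    ∃ M : ℂ → E, ∀ R, DifferentiableOn ℂ (M - ∑ i ∈ (ha R).toFinset, P i) (ball 0 (R / 2)) := by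
  have : Countable ι := by
    rw [← Set.countable_univ_iff,
      show (univ : Set ι) = ⋃ n : ℕ, {i | ‖a i‖ ≤ n} from
        (iUnion_eq_univ_iff.2 fun i => exists_nat_ge ‖a i‖).symm]
    exact countable_iUnion fun n => (ha n).countable
  obtain ⟨ε, hε, _, hεsum, -⟩ := NNReal.exists_pos_sum_of_countable one_ne_zero ι
  have hT : ∀ i, ∃ T : ℂ → E, Differentiable ℂ T ∧
      ∀ z ∈ ball 0 (‖a i‖ / 2), ‖P i z - T z‖ ≤ ε i := by
    intro i
    rcases eq_or_ne (a i) 0 with h0 | h0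
    · exact ⟨0, differentiable_const 0, by simp [h0]⟩
    have hball : ball 0 ‖a i‖ ⊆ {a i}ᶜ := fun z hz hzi => by
      rw [mem_singleton_iff.1 hzi, mem_ball_zero_iff] at hz
      exact lt_irrefl _ hz
    obtain ⟨T, hT, hPT⟩ := ((hP i).mono hball).exists_differentiable_norm_sub_lt
      (half_lt_self (norm_pos_iff.2 h0)) (hε i)
    exact ⟨T, hT, fun z hz => (hPT z hz).le⟩
  choose T hT hPT using hT
  refine ⟨fun z => ∑' i, (P i z - T i z), fun R => ?_⟩
  have htail := differentiableOn_tsum_sub_sum hP hT (NNReal.summable_coe.2 hεsum.summable) hPT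
    (R := R / 2) (ha R).toFinset fun i hi => by
      have hRi : R < ‖a i‖ := not_le.1 fun h => hi ((Finite.mem_toFinset _).2 h)
      linarith
  refine (htail.sub (Differentiable.fun_sum (u := (ha R).toFinset) fun i _ => hT i
    ).differentiableOn).congr fun z _ => ?_
  simp only [Pi.sub_apply, Finset.sum_apply, Finset.sum_sub_distrib]
  abel

theorem exists_analyticAt_sub_of_compl_mem_codiscrete {S : Set ℂ} (hS : Sᶜ ∈ codiscrete ℂ)
    {P : ℂ → ℂ → E} (hP : ∀ s ∈ S, DifferentiableOn ℂ (P s) {s}ᶜ) :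
    ∃ M : ℂ → E, (∀ z ∉ S, AnalyticAt ℂ M z) ∧ ∀ s ∈ S, AnalyticAt ℂ (M - P s) s := by
  have hfin : ∀ R, {s : S | ‖(s : ℂ)‖ ≤ R}.Finite := fun R =>
    (((isCompact_closedBall 0 R).finite_sdiff_of_mem_codiscreteWithin
      (codiscreteWithin_mono (subset_univ _) hS)).preimage Subtype.val_injective.injOn).subset
      fun s hs => by simpa using hs
  obtain ⟨M, hM⟩ := exists_forall_differentiableOn_sub_sum hfin fun s => hP s s.2
  set B := fun z : ℂ => (hfin (2 * ‖z‖ + 2)).toFinset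
  have hMB : ∀ z, AnalyticAt ℂ (M - ∑ s ∈ B z, P s) z := fun z =>
    (hM _).analyticAt (isOpen_ball.mem_nhds (by rw [mem_ball_zero_iff]; linarith))
  have hPan : ∀ (s : S) (z : ℂ), (s : ℂ) ≠ z → AnalyticAt ℂ (P s) z := fun s z h =>
    (hP s s.2).analyticAt (isOpen_compl_singleton.mem_nhds h.symm)
  refine ⟨M, fun z hz => ?_, fun s hs => ?_⟩
  · simpa using (hMB z).add ((B z).analyticAt_sum fun s _ => hPan s z fun h => hz (h ▸ s.2))
  · have hsB : ⟨s, hs⟩ ∈ B s := by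
      rw [Finite.mem_toFinset]
      exact (by linarith [norm_nonneg s] : ‖s‖ ≤ 2 * ‖s‖ + 2)
    have hMs := hMB s
    rw [← Finset.add_sum_erase _ _ hsB] at hMs
    convert hMs.add (((B s).erase ⟨s, hs⟩).analyticAt_sum fun t ht =>
      hPan t s fun h => Finset.ne_of_mem_erase ht (Subtype.ext h)) using 1
    abel

theorem exists_analyticAt_hasRemovableSingularityAt_sub {S : Set ℂ} (hS : Sᶜ ∈ codiscrete ℂ)
    {F : ℂ → E} (hF : ∀ s ∈ S, MeromorphicAt F s) :
    ∃ M : ℂ → E, (∀ z ∉ S, AnalyticAt ℂ M z) ∧ ∀ s ∈ S, HasRemovableSingularityAt (F - M) s := by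
  choose! P hP hFP using fun s hs => (hF s hs).exists_differentiableOn_hasRemovableSingularityAt_sub
  obtain ⟨M, hMS, hMP⟩ := exists_analyticAt_sub_of_compl_mem_codiscrete hS hP
  refine ⟨M, hMS, fun s hs => ?_⟩
  simpa using (hFP s hs).sub (hMP s hs).hasRemovableSingularityAt

end MittagLeffler

section Bezout

variable {f g M : ℂ → ℂ} {s : ℂ}

theorem HasRemovableSingularityAt.mul_of_inv_mul_sub
    (hM : HasRemovableSingularityAt ((f * g)⁻¹ - M) s) (hf : AnalyticAt ℂ f s) (hfs : f s ≠ 0)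
    (hg : AnalyticAt ℂ g s) (hgs : ∀ᶠ z in 𝓝[≠] s, g z ≠ 0) :
    HasRemovableSingularityAt (g * M) s := by
  obtain ⟨G, hG, hMG⟩ := hM
  refine ⟨f⁻¹ - g * G, (hf.inv hfs).sub (hg.mul hG), ?_⟩
  filter_upwards [hgs, hMG] with z hgz hz
  simp only [Pi.mul_apply, Pi.sub_apply, Pi.inv_apply, mul_inv] at hz ⊢
  linear_combination (-g z) * hz + (f z)⁻¹ * mul_inv_cancel₀ hgz

theorem HasRemovableSingularityAt.inv_sub_mul_of_inv_mul_sub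
    (hM : HasRemovableSingularityAt ((f * g)⁻¹ - M) s) (hf : AnalyticAt ℂ f s) (hfs : f s ≠ 0) :
    HasRemovableSingularityAt (g⁻¹ - f * M) s := by
  obtain ⟨G, hG, hMG⟩ := hM
  refine ⟨f * G, hf.mul hG, ?_⟩
  filter_upwards [hMG, eventually_nhdsWithin_of_eventually_nhds (hf.continuousAt.eventually_ne hfs)]
    with z hz hfz
  simp only [Pi.mul_apply, Pi.sub_apply, Pi.inv_apply, mul_inv] at hz ⊢
  linear_combination f z * hz - (g z)⁻¹ * mul_inv_cancel₀ hfz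

end Bezout

/-- Entire functions with no common zero generate the unit ideal:
there are entire `u`, `v` with `f·u + g·v = 1`. -/
theorem entire_bezout_identity_of_no_common_zero (f g : ℂ → ℂ)
    (hf : Differentiable ℂ f) (hg : Differentiable ℂ g)
    (h : ¬ ∃ z : ℂ, f z = 0 ∧ g z = 0) :
    ∃ u v : ℂ → ℂ, Differentiable ℂ u ∧ Differentiable ℂ v ∧
      ∀ z : ℂ, f z * u z + g z * v z = 1 := by
  simp only [not_exists, not_and] at h
  rcases (Complex.analyticOnNhd_univ_iff_differentiable.2 hg
    ).eqOn_zero_or_eventually_ne_zero_of_preconnected isPreconnected_univ with hg0 | hS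
  · have hf0 : ∀ z, f z ≠ 0 := fun z hz => h z hz (hg0 (mem_univ z))
    exact ⟨f⁻¹, 0, hf.inv hf0, differentiable_const 0, fun z => by simp [hf0 z]⟩
  have hgne : ∀ s, ∀ᶠ z in 𝓝[≠] s, g z ≠ 0 := fun s => by
    have := mem_codiscreteWithin_iff_forall_mem_nhdsNE.1 hS s (mem_univ s)
    rwa [compl_univ, union_empty] at this
  obtain ⟨M, hMS, hMP⟩ := exists_analyticAt_hasRemovableSingularityAt_sub (S := {z | g z = 0})
    (F := (f * g)⁻¹) hS fun s _ => ((hf.analyticAt s).mul (hg.analyticAt s)).meromorphicAt.inv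
  obtain ⟨u, hu, hu₀⟩ := exists_analyticOnNhd_eventuallyEq_of_hasRemovableSingularityAt
    (F := g * M) (U := univ) fun z _ => by
      by_cases hz : g z = 0
      · exact (hMP z hz).mul_of_inv_mul_sub (hf.analyticAt z) (h z · hz) (hg.analyticAt z) (hgne z)
      · exact ((hg.analyticAt z).mul (hMS z hz)).hasRemovableSingularityAt
  obtain ⟨v, hv, hv₀⟩ := exists_analyticOnNhd_eventuallyEq_of_hasRemovableSingularityAt
    (F := g⁻¹ - f * M) (U := univ) fun z _ => by
      by_cases hz : g z = 0
      · exact (hMP z hz).inv_sub_mul_of_inv_mul_sub (hf.analyticAt z) (h z · hz)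
      · exact (((hg.analyticAt z).inv hz).sub ((hf.analyticAt z).mul (hMS z hz))
          ).hasRemovableSingularityAt
  rw [Complex.analyticOnNhd_univ_iff_differentiable] at hu hv
  refine ⟨u, v, hu, hv, fun z => ?_⟩
  have hid : (fun z => f z * u z + g z * v z) =ᶠ[𝓝[≠] z] fun _ => 1 := by
    filter_upwards [hu₀ z (mem_univ z), hv₀ z (mem_univ z), hgne z] with w hwu hwv hgw
    simp only [hwu, hwv, Pi.mul_apply, Pi.sub_apply, Pi.inv_apply]
    field_simp
    ring
  have hcont : ContinuousAt (fun z => f z * u z + g z * v z) z :=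
    ((hf.mul hu).add (hg.mul hv)).continuous.continuousAt
  exact ((hcont.eventuallyEq_nhds_iff_eventuallyEq_nhdsNE continuousAt_const).1 hid).eq_of_nhds
end

section
/- Let B be an adequate Bézout domain. Then every nonzero prime ideal P of B is contained in a unique maximal ideal of B; in particular, the quotient ring B/P is a valuation domain. -/
/-- A Bézout domain is *adequate* if every nonzero non-invertible `a` admits, relative
to any nonzero non-invertible `b`, a factorization `a = c·d` with `c` coprime to `b`
and no non-invertible divisor of `d` coprime to `b`. -/
def IsAdequate (B : Type*) [CommRing B] : Prop :=
  ∀ a b : B, a ≠ 0 → b ≠ 0 → ¬IsUnit a → ¬IsUnit b →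
    ∃ c d : B, a = c * d ∧ IsCoprime c b ∧
      ∀ d' : B, d' ∣ d → ¬IsUnit d' → ¬IsCoprime d' b

/-- In an adequate Bézout domain every nonzero prime ideal is
contained in a unique maximal ideal; in particular the quotient by a nonzero prime
ideal is a valuation domain (divisibility is total). -/
theorem adequate_prime_in_unique_maximal (B : Type*) [CommRing B] [IsDomain B]
    [IsBezout B] (hB : IsAdequate B) (P : Ideal B) (hP : P.IsPrime) (hP0 : P ≠ ⊥) :
    (∃! M : Ideal B, M.IsMaximal ∧ P ≤ M) ∧
      (∀ x y : B ⧸ P, x ∣ y ∨ y ∣ x) := by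
  haveI := hP
  obtain ⟨M, hM, hPM⟩ := Ideal.exists_le_maximal P hP.ne_top
  obtain ⟨b, hbP, hb0⟩ := Submodule.exists_mem_ne_zero_of_ne_bot hP0
  have hbu : ¬IsUnit b := fun h => hP.ne_top (P.eq_top_of_isUnit_mem hbP h)
  -- key uniqueness claim
  have key : ∀ M₁ M₂ : Ideal B, M₁.IsMaximal → M₂.IsMaximal → P ≤ M₁ → P ≤ M₂ → M₁ = M₂ := by
    intro M₁ M₂ hM₁ hM₂ h₁ h₂
    by_contra hne
    have hsup : M₁ ⊔ M₂ = ⊤ := hM₁.coprime_of_ne hM₂ hne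
    have h1mem : (1 : B) ∈ M₁ ⊔ M₂ := hsup ▸ Submodule.mem_top
    obtain ⟨m₁, hm₁, m₂, hm₂, hsum⟩ := Submodule.mem_sup.mp h1mem
    have hm₁2 : m₁ ∉ M₂ := fun h =>
      hM₂.ne_top (M₂.eq_top_iff_one.mpr (hsum ▸ M₂.add_mem h hm₂))
    have hm₂1 : m₂ ∉ M₁ := fun h =>
      hM₁.ne_top (M₁.eq_top_iff_one.mpr (hsum ▸ M₁.add_mem hm₁ h))
    have hm₁0 : m₁ ≠ 0 := fun h => hm₁2 (h ▸ M₂.zero_mem)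
    have hm₂0 : m₂ ≠ 0 := fun h => hm₂1 (h ▸ M₁.zero_mem)
    have hm₁u : ¬IsUnit m₁ := fun h => hM₁.ne_top (M₁.eq_top_of_isUnit_mem hm₁ h)
    have hm₂u : ¬IsUnit m₂ := fun h => hM₂.ne_top (M₂.eq_top_of_isUnit_mem hm₂ h)
    -- first decomposition: b relative to m₁
    obtain ⟨c, d, hbcd, hc, hd⟩ := hB b m₁ hb0 hm₁0 hbu hm₁u
    have hdP : d ∈ P := by
      rcases hP.mem_or_mem (hbcd ▸ hbP) with h | h
      · exfalso
        obtain ⟨r, s, hrs⟩ := hc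
        exact hM₁.ne_top (M₁.eq_top_iff_one.mpr
          (hrs ▸ M₁.add_mem (M₁.mul_mem_left r (h₁ h)) (M₁.mul_mem_left s hm₁)))
      · exact h
    have hd0 : d ≠ 0 := fun h => hb0 (by rw [hbcd, h, mul_zero])
    have hdu : ¬IsUnit d := fun h => hP.ne_top (P.eq_top_of_isUnit_mem hdP h)
    -- second decomposition: d relative to m₂
    obtain ⟨e, f, hdef, he, hf⟩ := hB d m₂ hd0 hm₂0 hdu hm₂u
    have hfP : f ∈ P := by
      rcases hP.mem_or_mem (hdef ▸ hdP) with h | h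
      · exfalso
        obtain ⟨r, s, hrs⟩ := he
        exact hM₂.ne_top (M₂.eq_top_iff_one.mpr
          (hrs ▸ M₂.add_mem (M₂.mul_mem_left r (h₂ h)) (M₂.mul_mem_left s hm₂)))
      · exact h
    have hfu : ¬IsUnit f := fun h => hP.ne_top (P.eq_top_of_isUnit_mem hfP h)
    have hfd : f ∣ d := ⟨e, by rw [hdef, mul_comm]⟩
    -- f is a nonunit divisor of d, hence not coprime to m₁
    have hnc : ¬IsCoprime f m₁ := hd f hfd hfu
    have hnr : ¬IsRelPrime f m₁ := fun h => hnc (isRelPrime_iff_isCoprime.mp h)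
    rw [IsRelPrime] at hnr
    push_neg at hnr
    obtain ⟨z, hzf, hzm₁, hzu⟩ := hnr
    -- z is a nonunit divisor of f, hence not coprime to m₂
    have := hf z hzf hzu
    obtain ⟨k, hk⟩ := hzm₁
    exact this ⟨k, 1, by rw [one_mul, mul_comm k z, ← hk, hsum]⟩
  refine ⟨⟨M, ⟨hM, hPM⟩, fun M' ⟨hM', hPM'⟩ => key M' M hM' hM hPM' hPM⟩, ?_⟩
  -- the quotient is local
  haveI : IsLocalRing (B ⧸ P) := by
    apply IsLocalRing.of_unique_max_ideal
    have hsurj := Ideal.Quotient.mk_surjective (I := P)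
    obtain ⟨N, hN⟩ := Ideal.exists_maximal (B ⧸ P)
    refine ⟨N, hN, fun N' hN' => ?_⟩
    haveI : N'.IsMaximal := hN'
    haveI : N.IsMaximal := hN
    have c1 : (N.comap (Ideal.Quotient.mk P)).IsMaximal := Ideal.comap_isMaximal_of_surjective _ hsurj
    have c2 : (N'.comap (Ideal.Quotient.mk P)).IsMaximal := Ideal.comap_isMaximal_of_surjective _ hsurj
    have hle : ∀ N : Ideal (B ⧸ P), P ≤ N.comap (Ideal.Quotient.mk P) := fun N x hx => by
      simp [Ideal.Quotient.eq_zero_iff_mem.mpr hx]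
    have heq : N'.comap (Ideal.Quotient.mk P) = N.comap (Ideal.Quotient.mk P) :=
      key _ _ c2 c1 (hle _) (hle _)
    have := congrArg (Ideal.map (Ideal.Quotient.mk P)) heq
    rwa [Ideal.map_comap_of_surjective _ hsurj, Ideal.map_comap_of_surjective _ hsurj] at this
  haveI : IsBezout (B ⧸ P) :=
    Function.Surjective.isBezout (Ideal.Quotient.mk P) Ideal.Quotient.mk_surjective
  intro x y
  obtain ⟨g, hgx, hgy, a, b', hab⟩ :
      ∃ g : B ⧸ P, g ∣ x ∧ g ∣ y ∧ ∃ a b, a * x + b * y = g :=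
    ⟨_, IsBezout.gcd_dvd_left x y, IsBezout.gcd_dvd_right x y, IsBezout.gcd_eq_sum x y⟩
  obtain ⟨x', hx'⟩ := hgx
  obtain ⟨y', hy'⟩ := hgy
  rcases eq_or_ne g 0 with hg0 | hg0
  · left
    have hy0 : y = 0 := by rw [hy', hg0, zero_mul]
    exact ⟨0, by rw [hy0, mul_zero]⟩
  · have hone : a * x' + b' * y' = 1 := by
      apply mul_left_cancel₀ hg0
      rw [mul_one, mul_add, ← mul_assoc, ← mul_assoc, mul_comm g a, mul_comm g b',
        mul_assoc, mul_assoc, ← hx', ← hy', hab]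
    rcases IsLocalRing.isUnit_or_isUnit_of_add_one hone with h | h
    · left
      have hux' : IsUnit x' := isUnit_of_mul_isUnit_right h
      obtain ⟨u, hu⟩ := hux'
      have hxg : x ∣ g := ⟨↑u⁻¹, by rw [hx', ← hu, mul_assoc, Units.mul_inv, mul_one]⟩
      exact dvd_trans hxg ⟨y', hy'⟩
    · right
      have huy' : IsUnit y' := isUnit_of_mul_isUnit_right h
      obtain ⟨u, hu⟩ := huy'
      have hyg : y ∣ g := ⟨↑u⁻¹, by rw [hy', ← hu, mul_assoc, Units.mul_inv, mul_one]⟩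
      exact dvd_trans hyg ⟨x', hx'⟩
end

section
/- Let B be a Bézout domain and let I be a weakly prime ideal of B. Define I♯ = { r ∈ B | there exists a ∉ I with a·r ∈ I }. Then I♯ is a prime ideal of B containing I. Moreover, if P is a prime ideal of B, then P♯ = P. -/
/-- An ideal `I` of a Bézout domain is *weakly prime* if it is proper and its
complement is closed under least common multiples: for `a, b ∉ I` and `m` a least
common multiple of `a` and `b` (i.e. `a ∣ m`, `b ∣ m`, and `m` divides every common
multiple of `a` and `b`), we have `m ∉ I`. -/
def IsWeaklyPrime {B : Type*} [CommRing B] (I : Ideal B) : Prop :=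
  I ≠ ⊤ ∧ ∀ a b m : B, a ∉ I → b ∉ I → a ∣ m → b ∣ m →
    (∀ n : B, a ∣ n → b ∣ n → m ∣ n) → m ∉ I

/-- For a weakly prime ideal `I` of a Bézout domain, the set
`I♯ = {r | ∃ a ∉ I, a·r ∈ I}` is a prime ideal containing `I`; moreover for a prime
ideal `P` one has `P♯ = P`. -/
theorem weaklyPrime_sharp_isPrime (B : Type*) [CommRing B] [IsDomain B] [IsBezout B] :
    (∀ I : Ideal B, IsWeaklyPrime I →
      ∃ Q : Ideal B, (Q : Set B) = {r : B | ∃ a : B, a ∉ I ∧ a * r ∈ I} ∧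
        Q.IsPrime ∧ I ≤ Q) ∧
    (∀ P : Ideal B, P.IsPrime →
      {r : B | ∃ a : B, a ∉ P ∧ a * r ∈ P} = (P : Set B)) := by
  constructor
  · intro I hI
    letI := Classical.decEq B
    letI : GCDMonoid B := IsBezout.toGCDDomain B
    obtain ⟨hItop, hwp⟩ := hI
    have h1I : (1 : B) ∉ I := fun h => hItop (Ideal.eq_top_of_isUnit_mem I h isUnit_one)
    have hIS : ∀ r ∈ I, r ∈ {r : B | ∃ a : B, a ∉ I ∧ a * r ∈ I} := by
      intro r hr
      exact ⟨1, h1I, by simpa using hr⟩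
    refine ⟨{ carrier := {r : B | ∃ a : B, a ∉ I ∧ a * r ∈ I}
              add_mem' := ?_
              zero_mem' := hIS 0 I.zero_mem
              smul_mem' := ?_ }, rfl, ?_, hIS⟩
    · rintro r s ⟨a, ha, har⟩ ⟨b, hb, hbs⟩
      have hm : lcm a b ∉ I :=
        hwp a b (lcm a b) ha hb (dvd_lcm_left a b) (dvd_lcm_right a b)
          (fun n h1 h2 => lcm_dvd h1 h2)
      obtain ⟨k, hk⟩ := dvd_lcm_left a b
      obtain ⟨l, hl⟩ := dvd_lcm_right a b
      have h1 : lcm a b * r ∈ I := by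
        rw [hk, mul_comm a k, mul_assoc]; exact I.mul_mem_left k har
      have h2 : lcm a b * s ∈ I := by
        rw [hl, mul_comm b l, mul_assoc]; exact I.mul_mem_left l hbs
      exact ⟨lcm a b, hm, by rw [mul_add]; exact I.add_mem h1 h2⟩
    · rintro c r ⟨a, ha, har⟩
      exact ⟨a, ha, by rw [smul_eq_mul, mul_left_comm]; exact I.mul_mem_left c har⟩
    · constructor
      · intro h
        rw [Ideal.eq_top_iff_one] at h
        obtain ⟨a, ha, ha1⟩ := h
        exact ha (by simpa using ha1)
      · rintro r s ⟨a, ha, hars⟩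
        by_cases h : a * r ∈ I
        · exact Or.inl ⟨a, ha, h⟩
        · exact Or.inr ⟨a * r, h, by rw [mul_assoc]; exact hars⟩
  · intro P hP
    ext r
    constructor
    · rintro ⟨a, ha, har⟩
      exact (hP.mem_or_mem har).resolve_left ha
    · intro hr
      exact ⟨1, fun h => hP.ne_top (Ideal.eq_top_of_isUnit_mem P h isUnit_one),
        by simpa using hr⟩
end

section
/- Let B be an adequate Bézout domain. Then every nonzero weakly prime ideal I of B is contained in a unique maximal ideal of B; in particular, the quotient ring B/I is a valuation ring (possibly with zero divisors), i.e., for all x, y ∈ B/I either x divides y or y divides x. -/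
section Aux

variable {B : Type*} [CommRing B]

/-- If the (Bézout) gcd of two elements is a unit, they are coprime. -/
lemma aux_coprime_of_gcd_unit [IsBezout B] {x y : B} (h : IsUnit (IsBezout.gcd x y)) :
    IsCoprime x y := by
  obtain ⟨r, q, hrq⟩ := IsBezout.gcd_eq_sum x y
  obtain ⟨u, hu⟩ := h
  obtain ⟨w, hw⟩ := u.isUnit.exists_left_inv
  exact ⟨w * r, w * q, by rw [mul_assoc, mul_assoc, ← mul_add, hrq, ← hu, hw]⟩

lemma aux_not_coprime_gcd_not_unit [IsBezout B] {x y : B} (h : ¬IsCoprime x y) :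
    ¬IsUnit (IsBezout.gcd x y) := fun hu => h (aux_coprime_of_gcd_unit hu)

/-- Key step: given `x ∈ I` nonzero and `b` such that no element coprime to `b` lies in
`I`, adequacy plus weak primality produce a divisor `d ∈ I` of `x`, all of whose
non-unit divisors fail to be coprime to `b`. -/
lemma aux_step [IsDomain B] [IsBezout B] (hB : IsAdequate B) {I : Ideal B}
    (hI : IsWeaklyPrime I) {x b : B} (hx : x ∈ I) (hx0 : x ≠ 0) (hb0 : b ≠ 0)
    (hbu : ¬IsUnit b) (hcop : ∀ c : B, IsCoprime c b → c ∉ I) :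
    ∃ d : B, d ∈ I ∧ d ≠ 0 ∧ d ∣ x ∧ ∀ e : B, e ∣ d → ¬IsUnit e → ¬IsCoprime e b := by
  have hxu : ¬IsUnit x := fun h => hI.1 (I.eq_top_of_isUnit_mem hx h)
  obtain ⟨c, d, hcd, hc, hd⟩ := hB x b hx0 hb0 hxu hbu
  -- c and d are coprime
  have hg : IsUnit (IsBezout.gcd c d) := by
    by_contra hgu
    exact hd _ (IsBezout.gcd_dvd_right c d) hgu
      (hc.of_isCoprime_of_dvd_left (IsBezout.gcd_dvd_left c d))
  have hccd : IsCoprime c d := aux_coprime_of_gcd_unit hg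
  have hdx : d ∣ x := ⟨c, by rw [hcd, mul_comm]⟩
  have hcx : c ∣ x := ⟨d, hcd⟩
  have hdI : d ∈ I := by
    by_contra hdI
    exact hI.2 c d x (hcop c hc) hdI hcx hdx
      (fun n hcn hdn => hcd ▸ hccd.mul_dvd hcn hdn) hx
  refine ⟨d, hdI, fun h => hx0 (by rw [hcd, h, mul_zero]), hdx, hd⟩

/-- Uniqueness of the maximal ideal over a nonzero weakly prime ideal. -/
lemma aux_unique_max [IsDomain B] [IsBezout B] (hB : IsAdequate B) {I : Ideal B}
    (hI : IsWeaklyPrime I) (hI0 : I ≠ ⊥) {M N : Ideal B} (hM : M.IsMaximal)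
    (hN : N.IsMaximal) (hIM : I ≤ M) (hIN : I ≤ N) : M = N := by
  by_contra hMN
  -- find elements separating M and N
  have hMle : ¬M ≤ N := fun h => hMN (hM.eq_of_le hN.ne_top h)
  have hNle : ¬N ≤ M := fun h => (hMN (hN.eq_of_le hM.ne_top h).symm)
  obtain ⟨s₀, hs₀M, hs₀N⟩ := SetLike.not_le_iff_exists.mp hMle
  obtain ⟨t₀, ht₀N, ht₀M⟩ := SetLike.not_le_iff_exists.mp hNle
  -- extract coprime parts
  set g := IsBezout.gcd s₀ t₀ with hgdef
  obtain ⟨s, hs⟩ := IsBezout.gcd_dvd_left s₀ t₀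
  obtain ⟨t, ht⟩ := IsBezout.gcd_dvd_right s₀ t₀
  obtain ⟨r, q, hrq⟩ := IsBezout.gcd_eq_sum s₀ t₀
  have hg0 : g ≠ 0 := by
    intro h
    apply hs₀N
    rw [hs, ← hgdef, h, zero_mul]
    exact N.zero_mem
  have hst : IsCoprime s t := by
    refine ⟨r, q, mul_left_cancel₀ hg0 ?_⟩
    rw [mul_one]
    calc g * (r * s + q * t) = r * (g * s) + q * (g * t) := by ring
    _ = g := by rw [← hs, ← ht, hrq]
  have hgM : g ∉ M := fun h => ht₀M (by rw [ht]; exact M.mul_mem_right t h)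
  have hgN : g ∉ N := fun h => hs₀N (by rw [hs]; exact N.mul_mem_right s h)
  have hsM : s ∈ M := by
    rcases hM.isPrime.mem_or_mem (show g * s ∈ M from hs ▸ hs₀M) with h | h
    · exact absurd h hgM
    · exact h
  have htN : t ∈ N := by
    rcases hN.isPrime.mem_or_mem (show g * t ∈ N from ht ▸ ht₀N) with h | h
    · exact absurd h hgN
    · exact h
  have hsN : s ∉ N := fun h => hs₀N (by rw [hs]; exact N.mul_mem_left g h)
  have htM : t ∉ M := fun h => ht₀M (by rw [ht]; exact M.mul_mem_left g h)
  have hs0 : s ≠ 0 := fun h => hsN (h ▸ N.zero_mem)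
  have ht0 : t ≠ 0 := fun h => htM (h ▸ M.zero_mem)
  have hsu : ¬IsUnit s := fun h => hM.ne_top (M.eq_top_of_isUnit_mem hsM h)
  have htu : ¬IsUnit t := fun h => hN.ne_top (N.eq_top_of_isUnit_mem htN h)
  -- pick a nonzero element of I
  obtain ⟨a, haI, ha0⟩ := Submodule.exists_mem_ne_zero_of_ne_bot hI0
  -- nothing in I is coprime to s (resp. to t)
  have hcopS : ∀ c : B, IsCoprime c s → c ∉ I := by
    intro c ⟨r', q', h⟩ hcI
    exact hM.ne_top (Ideal.eq_top_iff_one M |>.mpr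
      (h ▸ M.add_mem (M.mul_mem_left r' (hIM hcI)) (M.mul_mem_left q' hsM)))
  have hcopT : ∀ c : B, IsCoprime c t → c ∉ I := by
    intro c ⟨r', q', h⟩ hcI
    exact hN.ne_top (Ideal.eq_top_iff_one N |>.mpr
      (h ▸ N.add_mem (N.mul_mem_left r' (hIN hcI)) (N.mul_mem_left q' htN)))
  obtain ⟨d, hdI, hd0, -, hdsat⟩ := aux_step hB hI haI ha0 hs0 hsu hcopS
  obtain ⟨e, heI, he0, hed, hesat⟩ := aux_step hB hI hdI hd0 ht0 htu hcopT
  have heu : ¬IsUnit e := fun h => hI.1 (I.eq_top_of_isUnit_mem heI h)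
  -- e is not coprime to s, so gcd e s is a non-unit...
  have hes : ¬IsCoprime e s := hdsat e hed heu
  set g₂ := IsBezout.gcd e s with hg₂def
  have hg₂u : ¬IsUnit g₂ := aux_not_coprime_gcd_not_unit hes
  -- ... but gcd e s divides e, hence is not coprime to t, contradicting g₂ ∣ s coprime to t
  exact hesat g₂ (IsBezout.gcd_dvd_left e s) hg₂u
    (hst.of_isCoprime_of_dvd_left (IsBezout.gcd_dvd_right e s))

end Aux

/-- In an adequate Bézout domain every nonzero weakly prime ideal `I`
is contained in a unique maximal ideal; in particular `B/I` is a valuation ring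
(possibly with zero divisors): divisibility in `B/I` is total. -/
theorem adequate_weaklyPrime_in_unique_maximal (B : Type*) [CommRing B] [IsDomain B]
    [IsBezout B] (hB : IsAdequate B) (I : Ideal B) (hI : IsWeaklyPrime I)
    (hI0 : I ≠ ⊥) :
    (∃! M : Ideal B, M.IsMaximal ∧ I ≤ M) ∧
      (∀ x y : B ⧸ I, x ∣ y ∨ y ∣ x) := by
  obtain ⟨M, hM, hIM⟩ := Ideal.exists_le_maximal I hI.1
  have huniq : ∀ N : Ideal B, N.IsMaximal ∧ I ≤ N → N = M :=
    fun N ⟨hN, hIN⟩ => aux_unique_max hB hI hI0 hN hM hIN hIM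
  refine ⟨⟨M, ⟨hM, hIM⟩, huniq⟩, ?_⟩
  -- divisibility in the quotient is total
  intro x y
  obtain ⟨u, rfl⟩ := Ideal.Quotient.mk_surjective x
  obtain ⟨v, rfl⟩ := Ideal.Quotient.mk_surjective y
  obtain ⟨g, ⟨u₁, hu₁⟩, ⟨v₁, hv₁⟩, r, q, hrq⟩ :
      ∃ g : B, g ∣ u ∧ g ∣ v ∧ ∃ r q : B, r * u + q * v = g :=
    ⟨IsBezout.gcd u v, IsBezout.gcd_dvd_left u v, IsBezout.gcd_dvd_right u v,
      IsBezout.gcd_eq_sum u v⟩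
  by_cases hg0 : g = 0
  · left
    have hv : v = 0 := by rw [hv₁, hg0, zero_mul]
    exact ⟨0, by rw [hv, mul_zero, map_zero]⟩
  have hcop : r * u₁ + q * v₁ = 1 := by
    apply mul_left_cancel₀ hg0
    rw [mul_one]
    calc g * (r * u₁ + q * v₁) = r * (g * u₁) + q * (g * v₁) := by ring
    _ = g := by rw [← hu₁, ← hv₁, hrq]
  -- at least one of u₁, v₁ is invertible mod I
  have hnotboth : u₁ ∉ M ∨ v₁ ∉ M := by
    by_contra h
    push_neg at h
    exact hM.ne_top (Ideal.eq_top_iff_one M |>.mpr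
      (hcop ▸ M.add_mem (M.mul_mem_left r h.1) (M.mul_mem_left q h.2)))
  -- if z ∉ M then z is invertible modulo I
  have hinv : ∀ z : B, z ∉ M → ∃ w : B, 1 - w * z ∈ I := by
    intro z hz
    by_contra h
    push_neg at h
    have hne : I ⊔ Ideal.span {z} ≠ ⊤ := by
      intro htop
      have h1 : (1 : B) ∈ I ⊔ Ideal.span {z} := htop ▸ Submodule.mem_top
      obtain ⟨i, hi, j, hj, hij⟩ := Submodule.mem_sup.mp h1
      obtain ⟨w, rfl⟩ := Ideal.mem_span_singleton.mp hj
      exact h w (by rw [mul_comm]; rw [← hij]; simpa using hi)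
    obtain ⟨M', hM', hle⟩ := Ideal.exists_le_maximal _ hne
    have : M' = M := huniq M' ⟨hM', le_trans le_sup_left hle⟩
    exact hz (this ▸ hle (le_sup_right (a := I) (Ideal.subset_span rfl)))
  rcases hnotboth with h | h
  · left
    obtain ⟨w, hw⟩ := hinv u₁ h
    refine ⟨Ideal.Quotient.mk I (w * v₁), ?_⟩
    rw [← map_mul, Ideal.Quotient.mk_eq_mk_iff_sub_mem]
    have : v - u * (w * v₁) = g * v₁ * (1 - w * u₁) := by
      rw [hv₁, hu₁]; ring
    rw [this]
    exact I.mul_mem_left _ hw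
  · right
    obtain ⟨w, hw⟩ := hinv v₁ h
    refine ⟨Ideal.Quotient.mk I (w * u₁), ?_⟩
    rw [← map_mul, Ideal.Quotient.mk_eq_mk_iff_sub_mem]
    have : u - v * (w * u₁) = g * u₁ * (1 - w * v₁) := by
      rw [hv₁, hu₁]; ring
    rw [this]
    exact I.mul_mem_left _ hw
end

section
/- Let E be the ring of entire functions and let I be a nonzero weakly prime ideal of E which is fixed, meaning there exists a nonzero g ∈ I whose zero set is contained in the zero set of every nonzero element of I. Then there exist t ∈ ℂ and an integer k ≥ 1 such that I is the principal ideal of E generated by the function z ↦ (z − t)^k. -/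
/-- The ring `E` of entire functions, as a subring of the ring of all functions
`ℂ → ℂ` with pointwise operations. -/
def Entire : Subring (ℂ → ℂ) where
  carrier := {f | Differentiable ℂ f}
  mul_mem' hf hg := hf.mul hg
  one_mem' := differentiable_const 1
  add_mem' hf hg := hf.add hg
  zero_mem' := differentiable_const 0
  neg_mem' hf := hf.neg

/-- The zero set of an entire function. -/
def zeroSet (f : Entire) : Set ℂ := {z : ℂ | (f : ℂ → ℂ) z = 0}

section Aux

open Function Filter Set

variable {t : ℂ}

lemma dslope_entire {f : ℂ → ℂ} (hf : Differentiable ℂ f) (t : ℂ) :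
    Differentiable ℂ (dslope f t) := by
  rw [← differentiableOn_univ] at hf ⊢
  exact (Complex.differentiableOn_dslope univ_mem).mpr hf

lemma iter_entire {f : ℂ → ℂ} (hf : Differentiable ℂ f) (t : ℂ) (n : ℕ) :
    Differentiable ℂ ((fun v => dslope v t)^[n] f) := by
  induction n generalizing f with
  | zero => exact hf
  | succ n ih =>
    rw [Function.iterate_succ_apply]
    exact ih (dslope_entire hf t)

lemma factor (t : ℂ) : ∀ (k : ℕ) (f : ℂ → ℂ),
    (∀ j < k, (fun v => dslope v t)^[j] f t = 0) →
    ∀ z, f z = (z - t) ^ k * (fun v => dslope v t)^[k] f z := by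
  intro k
  induction k with
  | zero => intro f _ z; simp
  | succ k ih =>
    intro f hv z
    have h1 := ih f (fun j hj => hv j (hj.trans (Nat.lt_succ_self k))) z
    have h2 : (fun v => dslope v t)^[k] f t = 0 := hv k (Nat.lt_succ_self k)
    have h3 : (z - t) * dslope ((fun v => dslope v t)^[k] f) t z
        = (fun v => dslope v t)^[k] f z := by
      have := sub_smul_dslope ((fun v => dslope v t)^[k] f) t z
      rw [h2, sub_zero] at this
      simpa [smul_eq_mul] using this
    rw [Function.iterate_succ_apply', h1, ← h3]
    ring

lemma vanish_iter (t : ℂ) : ∀ (k : ℕ) (u w : ℂ → ℂ), Differentiable ℂ u →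
    ContinuousAt w t → (∀ᶠ z in nhdsWithin t {t}ᶜ, u z = (z - t) ^ k * w z) →
    ∀ j < k, (fun v => dslope v t)^[j] u t = 0 := by
  intro k
  induction k with
  | zero => intro u w _ _ _ j hj; omega
  | succ k ih =>
    intro u w hu hw hev j hj
    have hut : u t = 0 := by
      have l1 : Tendsto u (nhdsWithin t {t}ᶜ) (nhds (u t)) :=
        (hu.continuous.continuousAt).continuousWithinAt.tendsto
      have l2 : Tendsto (fun z => (z - t) ^ (k + 1) * w z) (nhdsWithin t {t}ᶜ)
          (nhds 0) := by
        have : Tendsto (fun z : ℂ => (z - t) ^ (k + 1) * w z) (nhds t) (nhds 0) := by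
          have h0 : Tendsto (fun z : ℂ => (z - t) ^ (k + 1)) (nhds t) (nhds 0) := by
            have : ContinuousAt (fun z : ℂ => (z - t) ^ (k + 1)) t := by fun_prop
            simpa using this.tendsto
          simpa using h0.mul hw.tendsto
        exact this.mono_left nhdsWithin_le_nhds
      have l3 : Tendsto u (nhdsWithin t {t}ᶜ) (nhds 0) := l2.congr' (hev.mono fun z h => h.symm)
      exact tendsto_nhds_unique l1 l3
    -- dslope u t z = (z - t)^k * w z eventually on punctured nhds
    have hev' : ∀ᶠ z in nhdsWithin t {t}ᶜ, dslope u t z = (z - t) ^ k * w z := by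
      filter_upwards [hev, self_mem_nhdsWithin] with z hz hz'
      have hzt : z - t ≠ 0 := sub_ne_zero.mpr hz'
      have h4 : (z - t) * dslope u t z = u z := by
        have := sub_smul_dslope u t z
        rw [hut, sub_zero] at this
        simpa [smul_eq_mul] using this
      have : (z - t) * dslope u t z = (z - t) * ((z - t) ^ k * w z) := by
        rw [h4, hz]; ring
      exact mul_left_cancel₀ hzt this
    rcases Nat.eq_zero_or_eq_succ_pred j with hj0 | hj1
    · rw [hj0]; simpa using hut
    · rw [hj1, Function.iterate_succ_apply]
      exact ih (dslope u t) w (dslope_entire hu t) hw hev' _ (by omega)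

lemma exists_iter_ne (t : ℂ) {f : ℂ → ℂ} (hf : Differentiable ℂ f) (h0 : f ≠ 0) :
    ∃ n, (fun v => dslope v t)^[n] f t ≠ 0 := by
  obtain ⟨p, hp⟩ := hf.analyticAt t
  have hp0 : p ≠ 0 := by
    intro h
    apply h0
    have hev : ∀ᶠ z in nhds t, f z = 0 := hp.locally_zero_iff.mpr h
    have hA : AnalyticOnNhd ℂ f Set.univ := fun z _ => hf.analyticAt z
    funext z
    exact hA.eqOn_zero_of_preconnected_of_eventuallyEq_zero isPreconnected_univ
      (Set.mem_univ t) hev (Set.mem_univ z)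
  exact ⟨p.order, hp.iterate_dslope_fslope_ne_zero hp0⟩

end Aux

/-- A nonzero fixed weakly prime ideal of the ring of entire
functions is generated by `(z - t)^k` for some `t ∈ ℂ` and `k ≥ 1`. -/
theorem fixed_weaklyPrime_eq_span_pow (I : Ideal Entire) (hI : IsWeaklyPrime I)
    (hI0 : I ≠ ⊥)
    (hfixed : ∃ g ∈ I, g ≠ 0 ∧ ∀ f ∈ I, f ≠ 0 → zeroSet g ⊆ zeroSet f) :
    ∃ (t : ℂ) (k : ℕ), 1 ≤ k ∧
      I = Ideal.span ({⟨fun z => (z - t) ^ k, by show Differentiable ℂ fun z => (z - t) ^ k; fun_prop⟩} : Set Entire) := by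
  obtain ⟨g, hgI, hg0, hgmin⟩ := hfixed
  have hcoe0 : ∀ f : Entire, f ≠ 0 → (f : ℂ → ℂ) ≠ 0 := by
    intro f hf he
    exact hf (Subtype.ext he)
  -- the zero set of g is nonempty
  have hzne : (zeroSet g).Nonempty := by
    by_contra hempty
    rw [Set.not_nonempty_iff_eq_empty] at hempty
    have hne : ∀ z, (g : ℂ → ℂ) z ≠ 0 := by
      intro z hz
      exact absurd (hempty ▸ (hz : z ∈ zeroSet g)) (Set.notMem_empty z)
    have hinv : Differentiable ℂ (fun z => ((g : ℂ → ℂ) z)⁻¹) :=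
      fun z => ((g.2 z).inv (hne z))
    have h1 : (1 : Entire) ∈ I := by
      have hmem := I.mul_mem_right (⟨_, hinv⟩ : Entire) hgI
      have : g * (⟨_, hinv⟩ : Entire) = 1 := by
        apply Subtype.ext
        funext z
        exact mul_inv_cancel₀ (hne z)
      rwa [this] at hmem
    exact hI.1 (Ideal.eq_top_iff_one I |>.mpr h1)
  obtain ⟨t, ht⟩ := hzne
  have hvan : ∀ f : Entire, f ∈ I → f ≠ 0 → (f : ℂ → ℂ) t = 0 :=
    fun f hf hf0 => hgmin f hf hf0 ht
  set D : (ℂ → ℂ) → (ℂ → ℂ) := fun v => dslope v t with hD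
  set S : Set ℕ := {n | ∃ f : Entire, f ∈ I ∧ f ≠ 0 ∧ D^[n] (f : ℂ → ℂ) t ≠ 0} with hS
  have hSne : S.Nonempty := by
    obtain ⟨n, hn⟩ := exists_iter_ne t g.2 (hcoe0 g hg0)
    exact ⟨n, g, hgI, hg0, hn⟩
  set k := sInf S with hk
  obtain ⟨f₀, hf₀I, hf₀0, hf₀k⟩ : k ∈ S := Nat.sInf_mem hSne
  have hmin : ∀ f : Entire, f ∈ I → f ≠ 0 → ∀ j < k, D^[j] (f : ℂ → ℂ) t = 0 := by
    intro f hf hf0 j hj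
    by_contra hne
    have hjS : j ∈ S := ⟨f, hf, hf0, hne⟩
    exact absurd (Nat.sInf_le hjS) (by omega)
  have hk1 : 1 ≤ k := by
    rcases Nat.eq_zero_or_pos k with h | h
    · exfalso
      rw [h] at hf₀k
      exact hf₀k (hvan f₀ hf₀I hf₀0)
    · exact h
  have hpk_diff : Differentiable ℂ (fun z : ℂ => (z - t) ^ k) := by fun_prop
  set pk : Entire := ⟨fun z => (z - t) ^ k, hpk_diff⟩ with hpk
  set h : Entire := ⟨D^[k] (f₀ : ℂ → ℂ), iter_entire f₀.2 t k⟩ with hh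
  have hfac : ∀ z, (f₀ : ℂ → ℂ) z = (z - t) ^ k * (h : ℂ → ℂ) z :=
    factor t k (f₀ : ℂ → ℂ) (hmin f₀ hf₀I hf₀0)
  have hfeq : f₀ = pk * h := Subtype.ext (funext hfac)
  have hht : (h : ℂ → ℂ) t ≠ 0 := hf₀k
  have hpkI : pk ∈ I := by
    by_contra hpknI
    have hhnI : h ∉ I := by
      intro hhI
      have hh0 : h ≠ 0 := by
        intro e
        apply hht
        rw [e]
        rfl
      exact hht (hvan h hhI hh0)
    refine hI.2 pk h f₀ hpknI hhnI ⟨h, hfeq⟩ ⟨pk, by rw [hfeq, mul_comm]⟩ ?_ hf₀I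
    intro n hpk_n hh_n
    obtain ⟨v, hv⟩ := hpk_n
    obtain ⟨u, hu⟩ := hh_n
    have hwcont : ContinuousAt (fun z => (v : ℂ → ℂ) z * ((h : ℂ → ℂ) z)⁻¹) t :=
      (v.2.continuous.continuousAt).mul ((h.2.continuous.continuousAt).inv₀ hht)
    have hev : ∀ᶠ z in nhdsWithin t {t}ᶜ,
        (u : ℂ → ℂ) z = (z - t) ^ k * ((v : ℂ → ℂ) z * ((h : ℂ → ℂ) z)⁻¹) := by
      have hne : ∀ᶠ z in nhds t, (h : ℂ → ℂ) z ≠ 0 :=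
        (h.2.continuous.continuousAt).eventually_ne hht
      filter_upwards [nhdsWithin_le_nhds hne] with z hz
      have e1 : (n : ℂ → ℂ) z = (z - t) ^ k * (v : ℂ → ℂ) z :=
        congrFun (congrArg Subtype.val hv) z
      have e2 : (n : ℂ → ℂ) z = (h : ℂ → ℂ) z * (u : ℂ → ℂ) z :=
        congrFun (congrArg Subtype.val hu) z
      field_simp
      rw [← e1, e2]
      ring
    have hj0 := vanish_iter t k (u : ℂ → ℂ) _ u.2 hwcont hev
    have hufac := factor t k (u : ℂ → ℂ) hj0
    refine ⟨⟨D^[k] (u : ℂ → ℂ), iter_entire u.2 t k⟩, ?_⟩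
    apply Subtype.ext
    funext z
    have e2 : (n : ℂ → ℂ) z = (h : ℂ → ℂ) z * (u : ℂ → ℂ) z :=
      congrFun (congrArg Subtype.val hu) z
    show (n : ℂ → ℂ) z = (f₀ : ℂ → ℂ) z * D^[k] (u : ℂ → ℂ) z
    rw [e2, hufac z, hfac z]
    ring
  refine ⟨t, k, hk1, ?_⟩
  apply le_antisymm
  · intro f hf
    rw [Ideal.mem_span_singleton]
    by_cases hf0 : f = 0
    · rw [hf0]; exact dvd_zero _
    · exact ⟨⟨D^[k] (f : ℂ → ℂ), iter_entire f.2 t k⟩,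
        Subtype.ext (funext (factor t k (f : ℂ → ℂ) (hmin f hf hf0)))⟩
  · rw [Ideal.span_le, Set.singleton_subset_iff]
    exact hpkI
end
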